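/- arXiv:2309.13896 — 2 statements merged into one kernel-verified Lean document; each statement's English description precedes it below -/
import Mathlib

section
/- Let X_0 be a positive definite d×d real matrix and x_1,...,x_T a sequence of vectors in R^d. Define X_t = X_0 + Σ_{s=1}^t x_s x_s^T. Then Σ_{t=1}^T min(1, ‖x_t‖²_{X_{t-1}^{-1}}) ≤ 2 log(det X_T / det X_0), where ‖x‖²_A = x^T A x. -/
open Matrix Finset

lemma min_one_le_two_log {u : ℝ} (hu : 0 ≤ u) : min 1 u ≤ 2 * Real.log (1 + u) := by
  rcases le_total u 1 with h | h
  · rw [min_eq_right h]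
    have hpos : (0:ℝ) < 1 + u := by linarith
    have h1 : Real.log (1 / (1 + u)) ≤ 1 / (1 + u) - 1 :=
      Real.log_le_sub_one_of_pos (by positivity)
    rw [Real.log_div one_ne_zero hpos.ne', Real.log_one] at h1
    have h3 : u / 2 ≤ u / (1 + u) := by
      gcongr
      · linarith
    have h4 : 1 - 1 / (1 + u) = u / (1 + u) := by field_simp; ring
    linarith
  · rw [min_eq_left h]
    have h1 : Real.log 2 ≤ Real.log (1 + u) :=
      Real.log_le_log (by norm_num) (by linarith)
    have h2 := Real.log_two_gt_d9
    linarith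

lemma vecMulVec_posSemidef (d : ℕ) (v : Fin d → ℝ) : (vecMulVec v v).PosSemidef := by
  have : vecMulVec v v = (replicateRow Unit v)ᴴ * replicateRow Unit v := by
    rw [conjTranspose_replicateRow, vecMulVec_eq Unit]
    simp
  rw [this]
  exact posSemidef_conjTranspose_mul_self _

theorem elliptical_potential_lemma (d T : ℕ)
    (x : ℕ → Fin d → ℝ) (X : ℕ → Matrix (Fin d) (Fin d) ℝ)
    (hX0 : (X 0).PosDef)
    (hX : ∀ t, X t = X 0 + ∑ s ∈ Finset.Icc 1 t, vecMulVec (x s) (x s)) :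
    ∑ t ∈ Finset.Icc 1 T, min 1 (x t ⬝ᵥ (X (t - 1))⁻¹ *ᵥ x t)
      ≤ 2 * Real.log ((X T).det / (X 0).det) := by
  -- Each X t is positive definite
  have hpd : ∀ t, (X t).PosDef := by
    intro t
    rw [hX t]
    refine hX0.add_posSemidef ?_
    refine Finset.sum_induction _ _ (fun a b ha hb => ha.add hb) ?_ ?_
    · exact Matrix.PosSemidef.zero
    · intro i _
      exact vecMulVec_posSemidef d (x i)
  -- nonnegativity of the quadratic forms
  have hnn : ∀ t, 0 ≤ x (t + 1) ⬝ᵥ (X t)⁻¹ *ᵥ x (t + 1) := by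
    intro t
    have := ((hpd t).inv.posSemidef).dotProduct_mulVec_nonneg (x (t + 1))
    simpa using this
  -- determinant recursion
  have hdet : ∀ t, (X (t + 1)).det
      = (X t).det * (1 + x (t + 1) ⬝ᵥ (X t)⁻¹ *ᵥ x (t + 1)) := by
    intro t
    have hstep : X (t + 1) = X t + vecMulVec (x (t + 1)) (x (t + 1)) := by
      rw [hX (t + 1), hX t, Finset.sum_Icc_succ_top (by omega), add_assoc]
    have hunit : IsUnit (X t).det := (hpd t).det_pos.ne'.isUnit
    rw [hstep, vecMulVec_eq Unit, det_add_replicateCol_mul_replicateRow hunit]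
    congr 1
    rw [Matrix.mul_assoc, ← replicateCol_mulVec, det_unique]
    simp [Matrix.add_apply, Matrix.one_apply_eq]
  have hdpos : ∀ t, 0 < (X t).det := fun t => (hpd t).det_pos
  -- telescoping sum of logs
  have key : ∀ n, ∑ t ∈ Finset.Icc 1 n, Real.log (1 + x t ⬝ᵥ (X (t - 1))⁻¹ *ᵥ x t)
      = Real.log ((X n).det) - Real.log ((X 0).det) := by
    intro n
    induction n with
    | zero => simp
    | succ n ih =>
      rw [Finset.sum_Icc_succ_top (by omega), ih]
      have h1 : (n + 1) - 1 = n := rfl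
      rw [h1, hdet n, Real.log_mul (hdpos n).ne' (by have := hnn n; positivity)]
      ring
  -- combine
  have hsum : ∑ t ∈ Finset.Icc 1 T, min 1 (x t ⬝ᵥ (X (t - 1))⁻¹ *ᵥ x t)
      ≤ ∑ t ∈ Finset.Icc 1 T, 2 * Real.log (1 + x t ⬝ᵥ (X (t - 1))⁻¹ *ᵥ x t) := by
    refine Finset.sum_le_sum fun t ht => ?_
    refine min_one_le_two_log ?_
    have ht1 : 1 ≤ t := (Finset.mem_Icc.mp ht).1
    have h := hnn (t - 1)
    rwa [show t - 1 + 1 = t from by omega] at h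
  calc ∑ t ∈ Finset.Icc 1 T, min 1 (x t ⬝ᵥ (X (t - 1))⁻¹ *ᵥ x t)
      ≤ ∑ t ∈ Finset.Icc 1 T, 2 * Real.log (1 + x t ⬝ᵥ (X (t - 1))⁻¹ *ᵥ x t) := hsum
    _ = 2 * ∑ t ∈ Finset.Icc 1 T, Real.log (1 + x t ⬝ᵥ (X (t - 1))⁻¹ *ᵥ x t) := by
        rw [Finset.mul_sum]
    _ = 2 * (Real.log ((X T).det) - Real.log ((X 0).det)) := by rw [key]
    _ = 2 * Real.log ((X T).det / (X 0).det) := by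
        rw [Real.log_div (hdpos T).ne' (hdpos 0).ne']
end

section
/- Let X_0 be a positive definite d×d real matrix, x_1,...,x_T vectors in R^d, X_t = X_0 + Σ_{s=1}^t x_s x_s^T, and let p ∈ [0,1]. Then Σ_{t=1}^T (min(1, ‖x_t‖²_{X_{t-1}^{-1}}))^p ≤ 2^p T^{1-p} (log(det X_T / det X_0))^p. -/
open Matrix Finset

-- vecMulVec of a real vector with itself is PSD
lemma vecMulVec_self_posSemidef {d : ℕ} (v : Fin d → ℝ) :
    (vecMulVec v v).PosSemidef := by
  refine Matrix.PosSemidef.of_dotProduct_mulVec_nonneg ?_ ?_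
  · ext i j
    simp [Matrix.IsHermitian, conjTranspose, vecMulVec_apply, mul_comm]
  · intro y
    have h : star y ⬝ᵥ (vecMulVec v v) *ᵥ y = (v ⬝ᵥ y) * (v ⬝ᵥ y) := by
      simp [dotProduct, mulVec, vecMulVec_apply, Finset.mul_sum, Finset.sum_mul]
      rw [Finset.sum_comm]
      congr 1; ext i; congr 1; ext j; ring
    rw [h]
    exact mul_self_nonneg _

lemma sum_vecMulVec_posSemidef {d : ℕ} (x : ℕ → Fin d → ℝ) (F : Finset ℕ) :
    (∑ s ∈ F, vecMulVec (x s) (x s)).PosSemidef := by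
  classical
  induction F using Finset.induction_on with
  | empty => simpa using Matrix.PosSemidef.zero
  | insert _ _ h ih =>
      rw [Finset.sum_insert h]
      exact (vecMulVec_self_posSemidef _).add ih

-- determinant lemma
lemma det_add_vecMulVec {d : ℕ} {A : Matrix (Fin d) (Fin d) ℝ} (hA : A.PosDef)
    (u : Fin d → ℝ) :
    (A + vecMulVec u u).det = A.det * (1 + u ⬝ᵥ A⁻¹ *ᵥ u) := by
  have hinv : A * A⁻¹ = 1 := Matrix.mul_nonsing_inv _ hA.det_pos.ne'.isUnit
  have h1 : A * Matrix.replicateCol (Fin 1) (A⁻¹ *ᵥ u) = Matrix.replicateCol (Fin 1) u := by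
    rw [← Matrix.replicateCol_mulVec, Matrix.mulVec_mulVec, hinv, Matrix.one_mulVec]
  have key : A + vecMulVec u u
      = A * (1 + Matrix.replicateCol (Fin 1) (A⁻¹ *ᵥ u) * Matrix.replicateRow (Fin 1) u) := by
    rw [Matrix.mul_add, Matrix.mul_one, ← Matrix.mul_assoc, h1, Matrix.vecMulVec_eq (Fin 1)]
    rfl
  rw [key, Matrix.det_mul]
  exact congrArg (A.det * ·) (Matrix.det_one_add_replicateCol_mul_replicateRow _ _)

lemma min_le_two_log {q : ℝ} (hq : 0 ≤ q) : min 1 q ≤ 2 * Real.log (1 + q) := by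
  have hpos : (0:ℝ) < 1 + q := by linarith
  have h1 : 1 - (1 + q)⁻¹ ≤ Real.log (1 + q) := Real.one_sub_inv_le_log_of_pos hpos
  have hinv : (1 + q) * (1 + q)⁻¹ = 1 := mul_inv_cancel₀ hpos.ne'
  have hrnn : (0:ℝ) ≤ (1 + q)⁻¹ := by positivity
  have h2 : min 1 q ≤ 2 * (1 - (1 + q)⁻¹) := by
    rcases le_total q 1 with h | h
    · rw [min_eq_right h]
      nlinarith [mul_nonneg hq (sub_nonneg.2 h)]
    · rw [min_eq_left h]
      nlinarith [mul_nonneg hrnn (sub_nonneg.2 h)]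
  linarith

lemma sum_rpow_le_card_rpow (T : ℕ) (p : ℝ) (hp0 : 0 ≤ p) (hp1 : p ≤ 1)
    (a : ℕ → ℝ) (ha : ∀ t ∈ Finset.Icc 1 T, 0 ≤ a t) :
    ∑ t ∈ Finset.Icc 1 T, a t ^ p
      ≤ (T : ℝ) ^ (1 - p) * (∑ t ∈ Finset.Icc 1 T, a t) ^ p := by
  rcases Nat.eq_zero_or_pos T with rfl | hT
  · simp only [Finset.Icc_self, Nat.cast_zero]
    rw [show Finset.Icc 1 0 = ∅ by simp]
    simp only [Finset.sum_empty]
    positivity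
  · have hTpos : (0:ℝ) < T := by exact_mod_cast hT
    have hcard : (Finset.Icc 1 T).card = T := by simp
    have hw : ∑ _t ∈ Finset.Icc 1 T, (T:ℝ)⁻¹ = 1 := by
      rw [Finset.sum_const, hcard, nsmul_eq_mul, mul_inv_cancel₀ hTpos.ne']
    have hj := (Real.concaveOn_rpow hp0 hp1).le_map_sum
      (w := fun _ => (T:ℝ)⁻¹) (p := a) (t := Finset.Icc 1 T)
      (fun i _ => by positivity) hw (fun i hi => Set.mem_Ici.2 (ha i hi))
    have hSnn : 0 ≤ ∑ t ∈ Finset.Icc 1 T, a t := Finset.sum_nonneg ha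
    have h2 : (T:ℝ)⁻¹ * ∑ t ∈ Finset.Icc 1 T, a t ^ p
        ≤ ((T:ℝ)⁻¹) ^ p * (∑ t ∈ Finset.Icc 1 T, a t) ^ p := by
      rw [← Real.mul_rpow (by positivity) hSnn, Finset.mul_sum]
      simpa [smul_eq_mul, Finset.mul_sum] using hj
    have h5 : (T:ℝ) ^ (1 - p) = (T:ℝ) * ((T:ℝ)⁻¹) ^ p := by
      rw [Real.inv_rpow hTpos.le, sub_eq_add_neg, Real.rpow_add hTpos, Real.rpow_one,
        Real.rpow_neg hTpos.le]
    calc ∑ t ∈ Finset.Icc 1 T, a t ^ p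
        = (T:ℝ) * ((T:ℝ)⁻¹ * ∑ t ∈ Finset.Icc 1 T, a t ^ p) := by
          rw [← mul_assoc, mul_inv_cancel₀ hTpos.ne', one_mul]
      _ ≤ (T:ℝ) * (((T:ℝ)⁻¹) ^ p * (∑ t ∈ Finset.Icc 1 T, a t) ^ p) :=
          mul_le_mul_of_nonneg_left h2 hTpos.le
      _ = (T:ℝ) ^ (1 - p) * (∑ t ∈ Finset.Icc 1 T, a t) ^ p := by rw [h5, mul_assoc]

theorem generalized_elliptical_potential_lemma (d T : ℕ) (p : ℝ)
    (hp0 : 0 ≤ p) (hp1 : p ≤ 1)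
    (x : ℕ → Fin d → ℝ) (X : ℕ → Matrix (Fin d) (Fin d) ℝ)
    (hX0 : (X 0).PosDef)
    (hX : ∀ t, X t = X 0 + ∑ s ∈ Finset.Icc 1 t, vecMulVec (x s) (x s)) :
    ∑ t ∈ Finset.Icc 1 T, (min 1 (x t ⬝ᵥ (X (t - 1))⁻¹ *ᵥ x t)) ^ p
      ≤ 2 ^ p * (T : ℝ) ^ (1 - p) * (Real.log ((X T).det / (X 0).det)) ^ p := by
  have hXt : ∀ t, (X t).PosDef := fun t => by
    rw [hX t]; exact hX0.add_posSemidef (sum_vecMulVec_posSemidef x _)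
  have hqnn : ∀ t, 0 ≤ x t ⬝ᵥ (X (t - 1))⁻¹ *ᵥ x t := by
    intro t
    rcases eq_or_ne (x t) 0 with h | h
    · simp [h]
    · have := (hXt (t - 1)).inv.dotProduct_mulVec_pos h
      simpa using this.le
  have hstep : ∀ t : ℕ, 1 ≤ t → X t = X (t - 1) + vecMulVec (x t) (x t) := by
    intro t ht
    obtain ⟨k, rfl⟩ : ∃ k, t = k + 1 := ⟨t - 1, by omega⟩
    rw [hX, hX, Finset.sum_Icc_succ_top (Nat.le_add_left 1 k), ← add_assoc]
    simpa using (hX k).symm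
  have hdet : ∀ t : ℕ, 1 ≤ t →
      (X t).det = (X (t - 1)).det * (1 + x t ⬝ᵥ (X (t - 1))⁻¹ *ᵥ x t) := by
    intro t ht
    rw [hstep t ht]
    exact det_add_vecMulVec (hXt (t - 1)) (x t)
  have hlog : ∀ n : ℕ, Real.log ((X n).det / (X 0).det)
      = ∑ t ∈ Finset.Icc 1 n, Real.log (1 + x t ⬝ᵥ (X (t - 1))⁻¹ *ᵥ x t) := by
    intro n
    induction n with
    | zero => simp [div_self (hXt 0).det_pos.ne']
    | succ m ih =>
        have h1 : (0:ℝ) < (X m).det / (X 0).det :=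
          div_pos (hXt m).det_pos (hXt 0).det_pos
        have h2 : (0:ℝ) < 1 + x (m+1) ⬝ᵥ (X (m+1-1))⁻¹ *ᵥ x (m+1) := by
          have := hqnn (m+1); linarith
        rw [Finset.sum_Icc_succ_top (Nat.le_add_left 1 m), ← ih,
          hdet (m+1) (Nat.le_add_left 1 m)]
        simp only [Nat.add_sub_cancel] at h2 ⊢
        rw [mul_div_right_comm, Real.log_mul h1.ne' (by linarith)]
  have hlognn : ∀ t, 0 ≤ Real.log (1 + x t ⬝ᵥ (X (t - 1))⁻¹ *ᵥ x t) := fun t =>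
    Real.log_nonneg (by linarith [hqnn t])
  set L := Real.log ((X T).det / (X 0).det) with hL
  have hLnn : 0 ≤ L := by
    rw [hL, hlog T]
    exact Finset.sum_nonneg fun t _ => hlognn t
  have hSle : ∑ t ∈ Finset.Icc 1 T, min 1 (x t ⬝ᵥ (X (t - 1))⁻¹ *ᵥ x t) ≤ 2 * L := by
    rw [hL, hlog T, Finset.mul_sum]
    exact Finset.sum_le_sum fun t _ => min_le_two_log (hqnn t)
  have hmin_nn : ∀ t, (0:ℝ) ≤ min 1 (x t ⬝ᵥ (X (t - 1))⁻¹ *ᵥ x t) := fun t =>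
    le_min zero_le_one (hqnn t)
  have hSnn : 0 ≤ ∑ t ∈ Finset.Icc 1 T, min 1 (x t ⬝ᵥ (X (t - 1))⁻¹ *ᵥ x t) :=
    Finset.sum_nonneg fun t _ => hmin_nn t
  calc ∑ t ∈ Finset.Icc 1 T, (min 1 (x t ⬝ᵥ (X (t - 1))⁻¹ *ᵥ x t)) ^ p
      ≤ (T:ℝ) ^ (1 - p)
          * (∑ t ∈ Finset.Icc 1 T, min 1 (x t ⬝ᵥ (X (t - 1))⁻¹ *ᵥ x t)) ^ p :=
        sum_rpow_le_card_rpow T p hp0 hp1 _ (fun t _ => hmin_nn t)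
    _ ≤ (T:ℝ) ^ (1 - p) * (2 * L) ^ p :=
        mul_le_mul_of_nonneg_left (Real.rpow_le_rpow hSnn hSle hp0)
          (Real.rpow_nonneg (Nat.cast_nonneg T) _)
    _ = 2 ^ p * (T:ℝ) ^ (1 - p) * L ^ p := by
        rw [Real.mul_rpow (by norm_num) hLnn]; ring
end
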